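/- arXiv:1703.05073 — 4 statements merged into one kernel-verified Lean document; each statement's English description precedes it below -/
import Mathlib

section
/- The twisted N=1 Schrödinger–Neveu–Schwarz algebra tsns, defined as the complex vector space with basis {L_n, G_r, Y_p, M_p | n ∈ ℤ, r ∈ 1/2+ℤ, p ∈ (1/2)ℤ} and the given brackets, satisfies the super Jacobi identity and is therefore a Lie superalgebra, with even part spanned by {L_n, Y_n, M_n | n ∈ ℤ} and odd part spanned by {G_r, Y_r, M_r | r ∈ 1/2+ℤ}. -/
open Finsupp

/-- Basis indices of the twisted `N = 1` Schrödinger–Neveu–Schwarz algebra.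
`L n` is `L_n` (`n ∈ ℤ`), `G k` is `G_{k+1/2}` (`k ∈ ℤ`),
`Y k` is `Y_{k/2}` and `M k` is `M_{k/2}` (`k ∈ ℤ`, so `k/2` ranges over `(1/2)ℤ`). -/
inductive TIdx : Type
  | L : ℤ → TIdx
  | G : ℤ → TIdx
  | Y : ℤ → TIdx
  | M : ℤ → TIdx
  deriving DecidableEq

noncomputable section

/-- The underlying vector space of `tsns`: the free `ℂ`-vector space on the basis. -/
abbrev Tsns : Type := TIdx →₀ ℂ

/-- The basis vectors. -/
def bs (i : TIdx) : Tsns := Finsupp.single i 1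

/-- The `ℤ₂`-parity of a basis vector. -/
def parity : TIdx → ZMod 2
  | .L _ => 0
  | .G _ => 1
  | .Y k => (k : ZMod 2)
  | .M k => (k : ZMod 2)

/-- The sign `(-1)^{ab}` for parities `a, b`. -/
def sg (a b : ZMod 2) : ℂ := if a = 1 ∧ b = 1 then -1 else 1

/-- The super-bracket of `tsns` on basis vectors. -/
def brIdx : TIdx → TIdx → Tsns
  | .L n, .L m => ((m : ℂ) - n) • bs (.L (n + m))
  | .L n, .G k => ((k : ℂ) + 1/2 - n/2) • bs (.G (k + n))
  | .G k, .L n => (-((k : ℂ) + 1/2 - n/2)) • bs (.G (k + n))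
  | .L n, .Y k => (if (k : ZMod 2) = 0 then ((k : ℂ) - n)/2 else (k : ℂ)/2) • bs (.Y (k + 2*n))
  | .Y k, .L n => (-(if (k : ZMod 2) = 0 then ((k : ℂ) - n)/2 else (k : ℂ)/2)) • bs (.Y (k + 2*n))
  | .L n, .M k => (if (k : ZMod 2) = 0 then (k : ℂ)/2 else ((k : ℂ) + n)/2) • bs (.M (k + 2*n))
  | .M k, .L n => (-(if (k : ZMod 2) = 0 then (k : ℂ)/2 else ((k : ℂ) + n)/2)) • bs (.M (k + 2*n))
  | .G k, .G l => (2 : ℂ) • bs (.L (k + l + 1))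
  | .G l, .Y k => (if (k : ZMod 2) = 0 then ((k : ℂ) - 2*l - 1)/4 else 2) • bs (.Y (k + 2*l + 1))
  | .Y k, .G l => (if (k : ZMod 2) = 0 then -(((k : ℂ) - 2*l - 1)/4) else 2) • bs (.Y (k + 2*l + 1))
  | .G l, .M k => (if (k : ZMod 2) = 0 then (k : ℂ)/4 else 2) • bs (.M (k + 2*l + 1))
  | .M k, .G l => (if (k : ZMod 2) = 0 then -((k : ℂ)/4) else 2) • bs (.M (k + 2*l + 1))
  | .Y k, .Y l =>
      (if (k : ZMod 2) = 0 then (if (l : ZMod 2) = 0 then ((l : ℂ) - k)/4 else (l : ℂ)/4)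
       else (if (l : ZMod 2) = 0 then -((k : ℂ)/4) else 2)) • bs (.M (k + l))
  | _, _ => 0

/-- The super-bracket of `tsns`, as a bilinear map. -/
def brk : Tsns →ₗ[ℂ] Tsns →ₗ[ℂ] Tsns :=
  Finsupp.lsum ℂ fun i => LinearMap.toSpanSingleton ℂ _
    (Finsupp.lsum ℂ fun j => LinearMap.toSpanSingleton ℂ Tsns (brIdx i j))

/-- `x` is homogeneous of parity `σ`. -/
def IsHom (σ : ZMod 2) (x : Tsns) : Prop := ∀ i ∈ x.support, parity i = σ

/-- The tensor square `tsns ⊗ tsns`, modelled as the free vector space on pairs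
of basis indices. -/
abbrev T2 : Type := (TIdx × TIdx) →₀ ℂ

/-- The tensor cube `tsns ⊗ tsns ⊗ tsns`. -/
abbrev T3 : Type := (TIdx × TIdx × TIdx) →₀ ℂ

/-- The tensor product map `tsns × tsns → tsns ⊗ tsns`. -/
def tp : Tsns →ₗ[ℂ] Tsns →ₗ[ℂ] T2 :=
  Finsupp.lsum ℂ fun i => LinearMap.toSpanSingleton ℂ _
    (Finsupp.lsum ℂ fun j => LinearMap.toSpanSingleton ℂ T2 (Finsupp.single (i, j) 1))

/-- The tensor product map `tsns × tsns × tsns → tsns ⊗ tsns ⊗ tsns`. -/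
def t3 : Tsns →ₗ[ℂ] Tsns →ₗ[ℂ] Tsns →ₗ[ℂ] T3 :=
  Finsupp.lsum ℂ fun i => LinearMap.toSpanSingleton ℂ _
    (Finsupp.lsum ℂ fun j => LinearMap.toSpanSingleton ℂ _
      (Finsupp.lsum ℂ fun k => LinearMap.toSpanSingleton ℂ T3 (Finsupp.single (i, j, k) 1)))

/-- The adjoint diagonal action of `tsns` on `tsns ⊗ tsns`:
`x ∗ (a ⊗ b) = [x,a] ⊗ b + (-1)^{[x][a]} a ⊗ [x,b]`. -/
def star2 : Tsns →ₗ[ℂ] T2 →ₗ[ℂ] T2 :=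
  Finsupp.lsum ℂ fun i => LinearMap.toSpanSingleton ℂ _
    (Finsupp.lsum ℂ fun p => LinearMap.toSpanSingleton ℂ T2
      (tp (brIdx i p.1) (bs p.2) + sg (parity i) (parity p.1) • tp (bs p.1) (brIdx i p.2)))

/-- The adjoint diagonal action of `tsns` on `tsns ⊗ tsns ⊗ tsns`. -/
def star3 : Tsns →ₗ[ℂ] T3 →ₗ[ℂ] T3 :=
  Finsupp.lsum ℂ fun i => LinearMap.toSpanSingleton ℂ _
    (Finsupp.lsum ℂ fun t => LinearMap.toSpanSingleton ℂ T3
      (t3 (brIdx i t.1) (bs t.2.1) (bs t.2.2)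
        + sg (parity i) (parity t.1) • t3 (bs t.1) (brIdx i t.2.1) (bs t.2.2)
        + (sg (parity i) (parity t.1) * sg (parity i) (parity t.2.1)) •
            t3 (bs t.1) (bs t.2.1) (brIdx i t.2.2)))

/-- The super-twist map `τ(x ⊗ y) = (-1)^{[x][y]} y ⊗ x`. -/
def tau : T2 →ₗ[ℂ] T2 :=
  Finsupp.lsum ℂ fun p => LinearMap.toSpanSingleton ℂ T2
    (sg (parity p.1) (parity p.2) • Finsupp.single (p.2, p.1) 1)

/-- The super-cyclic map `ξ(x₁ ⊗ x₂ ⊗ x₃) = (-1)^{[x₁]([x₂]+[x₃])} x₂ ⊗ x₃ ⊗ x₁`. -/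
def xi : T3 →ₗ[ℂ] T3 :=
  Finsupp.lsum ℂ fun t => LinearMap.toSpanSingleton ℂ T3
    (sg (parity t.1) (parity t.2.1 + parity t.2.2) • Finsupp.single (t.2.1, t.2.2, t.1) 1)

/-- `Im(1⊗1 - τ) ⊆ tsns ⊗ tsns`. -/
def ImSkew : Submodule ℂ T2 := LinearMap.range (LinearMap.id - tau)

/-- `ℂ M₀ ⊗ M₀`, the tensor square of the center. -/
def CC : Submodule ℂ T2 := Submodule.span ℂ {Finsupp.single (TIdx.M 0, TIdx.M 0) 1}

/-- The `(1/2)ℤ`-degree of a basis vector, recorded in half-units (i.e. twice the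
degree, an integer). -/
def hdeg : TIdx → ℤ
  | .L n => 2*n
  | .G k => 2*k + 1
  | .Y k => k
  | .M k => k

/-- The degree (in half-units) of a basis vector of the tensor square. -/
def hdeg2 (p : TIdx × TIdx) : ℤ := hdeg p.1 + hdeg p.2

/-- `d : tsns → tsns ⊗ tsns` is a homogeneous derivation of `ℤ₂`-parity `π`:
`d [x,y] = (-1)^{[d][x]} x ∗ d y - (-1)^{[y]([d]+[x])} y ∗ d x`
(stated on homogeneous basis vectors). -/
def IsDerP (π : ZMod 2) (d : Tsns →ₗ[ℂ] T2) : Prop :=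
  ∀ i j : TIdx, d (brk (bs i) (bs j)) =
    sg π (parity i) • star2 (bs i) (d (bs j))
      - sg (parity j) (π + parity i) • star2 (bs j) (d (bs i))

/-- An even derivation `tsns → tsns ⊗ tsns`. -/
def IsDer2 (d : Tsns →ₗ[ℂ] T2) : Prop := IsDerP 0 d

/-- The special derivations `d^♮` on basis vectors (parameters `α, α†, β, β†`). -/
def dnatB (a a' b b' : ℂ) : TIdx → T2
  | .L n => (a * n) • Finsupp.single (.M 0, .M (2*n)) 1
      + (a' * n) • Finsupp.single (.M (2*n), .M 0) 1
  | .G k => (a * ((k : ℂ) + 1/2)) • Finsupp.single (.M 0, .M (2*k+1)) 1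
      + (a' * ((k : ℂ) + 1/2)) • Finsupp.single (.M (2*k+1), .M 0) 1
  | .Y k => b • Finsupp.single (.M 0, .Y k) 1 + b' • Finsupp.single (.Y k, .M 0) 1
  | .M k => (2*b) • Finsupp.single (.M 0, .M k) 1 + (2*b') • Finsupp.single (.M k, .M 0) 1

/-- The special derivations `d^♮ : tsns → tsns ⊗ tsns`. -/
def dnat (a a' b b' : ℂ) : Tsns →ₗ[ℂ] T2 :=
  Finsupp.lsum ℂ fun i => LinearMap.toSpanSingleton ℂ T2 (dnatB a a' b b' i)

/-- Multiplication by `(-1)^{σ·[u]}` on `tsns ⊗ tsns`. -/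
def twT2 (σ : ZMod 2) : T2 →ₗ[ℂ] T2 :=
  Finsupp.lsum ℂ fun p => LinearMap.toSpanSingleton ℂ T2
    (sg σ (parity p.1 + parity p.2) • Finsupp.single p 1)

/-- The coboundary `Δ_r (x) = (-1)^{[r][x]} x ∗ r`. -/
def Δr (r : T2) : Tsns →ₗ[ℂ] T2 :=
  Finsupp.lsum ℂ fun i => LinearMap.toSpanSingleton ℂ T2 (star2 (bs i) (twT2 (parity i) r))

/-- The embedding `tsns ⊗ (tsns ⊗ tsns) → tsns ⊗ tsns ⊗ tsns`. -/
def t13 : Tsns →ₗ[ℂ] T2 →ₗ[ℂ] T3 :=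
  Finsupp.lsum ℂ fun i => LinearMap.toSpanSingleton ℂ _
    (Finsupp.lsum ℂ fun q => LinearMap.toSpanSingleton ℂ T3 (Finsupp.single (i, q.1, q.2) 1))

/-- `1 ⊗ D : tsns ⊗ tsns → tsns ⊗ tsns ⊗ tsns` for an (even) linear map `D`. -/
def oneTensor (D : Tsns →ₗ[ℂ] T2) : T2 →ₗ[ℂ] T3 :=
  Finsupp.lsum ℂ fun p => LinearMap.toSpanSingleton ℂ T3 (t13 (bs p.1) (D (bs p.2)))

/-- The summand of `c(r)` coming from a pair of basis tensors
`p = a_i ⊗ b_i`, `q = a_j ⊗ b_j`. -/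
def cB (p q : TIdx × TIdx) : T3 :=
  sg (parity q.1) (parity p.2) • t3 (brIdx p.1 q.1) (bs p.2) (bs q.2)
    + t3 (bs p.1) (brIdx p.2 q.1) (bs q.2)
    + sg (parity q.1) (parity p.2) • t3 (bs p.1) (bs q.1) (brIdx p.2 q.2)

/-- `c` as a bilinear map. -/
def cY : T2 →ₗ[ℂ] T2 →ₗ[ℂ] T3 :=
  Finsupp.lsum ℂ fun p => LinearMap.toSpanSingleton ℂ _
    (Finsupp.lsum ℂ fun q => LinearMap.toSpanSingleton ℂ T3 (cB p q))

/-- `c(r) = [r¹²,r¹³] + [r¹²,r²³] + [r¹³,r²³]`. -/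
def cr (r : T2) : T3 := cY r r

/-- `(tsns, [·,·], D)` is a Lie superbialgebra: `Im D ⊆ Im(1⊗1−τ)`, the super
co-Jacobi identity holds, and `D` is a 1-cocycle. -/
def IsSuperBialg (D : Tsns →ₗ[ℂ] T2) : Prop :=
  (∀ x : Tsns, D x ∈ ImSkew) ∧
  (∀ x : Tsns,
    oneTensor D (D x) + xi (oneTensor D (D x)) + xi (xi (oneTensor D (D x))) = 0) ∧
  (∀ i j : TIdx, D (brk (bs i) (bs j)) =
    star2 (bs i) (D (bs j)) - sg (parity i) (parity j) • star2 (bs j) (D (bs i)))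

end

/-! The bracket of two basis vectors is a multiple of a single basis vector, whose index is
given by an associative and commutative addition on `TIdx` for which the parity is additive.
Skew-symmetry, the grading and the Jacobi identity therefore reduce to identities between the
structure constants, which are polynomial identities once the types of the three indices and the
parities of the `Y`/`M` indices are fixed. -/

namespace TIdx

/-- The half-degrees add, and so do the levels `L, G ↦ 0`, `Y ↦ 1`, `M ↦ 2`, truncated at `2`;
pairs with vanishing bracket such as `Y, M` get an index too, which makes the addition
associative. -/
def add : TIdx → TIdx → TIdx
  | L n, L m => L (n + m)
  | L n, G k => G (k + n)
  | G k, L n => G (k + n)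
  | G k, G l => L (k + l + 1)
  | L n, Y k => Y (k + 2*n)
  | Y k, L n => Y (k + 2*n)
  | L n, M k => M (k + 2*n)
  | M k, L n => M (k + 2*n)
  | G l, Y k => Y (k + 2*l + 1)
  | Y k, G l => Y (k + 2*l + 1)
  | G l, M k => M (k + 2*l + 1)
  | M k, G l => M (k + 2*l + 1)
  | Y k, Y l => M (k + l)
  | Y k, M l => M (k + l)
  | M k, Y l => M (k + l)
  | M k, M l => M (k + l)

instance : AddCommSemigroup TIdx where
  add := add
  add_assoc i j k := by
    change add (add i j) k = add i (add j k)
    cases i <;> cases j <;> cases k <;> simp only [add, L.injEq, M.injEq, G.injEq, Y.injEq] <;> ring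
  add_comm i j := by
    change add i j = add j i
    cases i <;> cases j <;> simp only [add, L.injEq, M.injEq] <;> ring

theorem add_def (i j : TIdx) : i + j = add i j := rfl

@[elab_as_elim]
theorem evenOddCases {P : TIdx → Prop} (L : ∀ n, P (L n)) (G : ∀ k, P (G k))
    (Y_even : ∀ k, P (Y (2 * k))) (Y_odd : ∀ k, P (Y (2 * k + 1)))
    (M_even : ∀ k, P (M (2 * k))) (M_odd : ∀ k, P (M (2 * k + 1))) (i : TIdx) : P i := by
  cases i with
  | L n => exact L n
  | G k => exact G k
  | Y k => obtain ⟨k, rfl | rfl⟩ := Int.even_or_odd' k <;> solve_by_elim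
  | M k => obtain ⟨k, rfl | rfl⟩ := Int.even_or_odd' k <;> solve_by_elim

end TIdx

theorem parity_eq_hdeg (i : TIdx) : parity i = (hdeg i : ZMod 2) := by
  cases i <;> simp [parity, hdeg, CharTwo.two_eq_zero]

theorem hdeg_add (i j : TIdx) : hdeg (i + j) = hdeg i + hdeg j := by
  cases i <;> cases j <;> simp only [TIdx.add_def, TIdx.add, hdeg] <;> ring

theorem parity_add (i j : TIdx) : parity (i + j) = parity i + parity j := by
  simp only [parity_eq_hdeg, hdeg_add, Int.cast_add]

noncomputable def brCoef (i j : TIdx) : ℂ := brIdx i j (i + j)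

theorem brIdx_eq_single (i j : TIdx) : brIdx i j = Finsupp.single (i + j) (brCoef i j) := by
  cases i <;> cases j <;>
    simp only [brCoef, brIdx, bs, TIdx.add_def, TIdx.add, Finsupp.smul_single, smul_eq_mul,
      mul_one, Finsupp.single_eq_same, Finsupp.coe_zero, Pi.zero_apply, Finsupp.single_zero]

theorem brCoef_skew (i j : TIdx) : brCoef i j = -sg (parity i) (parity j) * brCoef j i := by
  induction i using TIdx.evenOddCases <;> induction j using TIdx.evenOddCases <;>
    simp only [brCoef, brIdx, bs, TIdx.add_def, TIdx.add, parity, sg, Finsupp.smul_single,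
      smul_eq_mul, mul_one, Finsupp.single_eq_same, Finsupp.coe_zero, Pi.zero_apply,
      Int.cast_add, Int.cast_mul, Int.cast_ofNat, Int.cast_one, CharTwo.two_eq_zero, zero_mul,
      zero_add, one_ne_zero, zero_ne_one, and_true, and_false,
      if_true, if_false] <;> ring

theorem brCoef_jacobi (i j k : TIdx) :
    brCoef j k * brCoef i (j + k) =
      brCoef i j * brCoef (i + j) k
        + sg (parity i) (parity j) * (brCoef i k * brCoef j (i + k)) := by
  induction i using TIdx.evenOddCases <;> induction j using TIdx.evenOddCases <;>
    induction k using TIdx.evenOddCases <;>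
    simp only [brCoef, brIdx, bs, TIdx.add_def, TIdx.add, parity, sg, Finsupp.smul_single,
      smul_eq_mul, mul_one, Finsupp.single_eq_same, Finsupp.coe_zero, Pi.zero_apply,
      Int.cast_add, Int.cast_mul, Int.cast_ofNat, Int.cast_one, CharTwo.two_eq_zero, zero_mul,
      add_zero, zero_add, one_add_one_eq_two, one_ne_zero, zero_ne_one, and_true, and_false,
      if_true, if_false] <;> ring

theorem brk_single (i j : TIdx) (a b : ℂ) :
    brk (Finsupp.single i a) (Finsupp.single j b) =
      Finsupp.single (i + j) (a * b * brCoef i j) := by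
  simp only [brk, Finsupp.lsum_single, LinearMap.toSpanSingleton_apply, LinearMap.smul_apply,
    brIdx_eq_single, Finsupp.smul_single, smul_eq_mul, mul_assoc]

theorem brk_bs (i j : TIdx) : brk (bs i) (bs j) = Finsupp.single (i + j) (brCoef i j) := by
  rw [bs, bs, brk_single, one_mul, one_mul]

theorem brk_bs_skew (i j : TIdx) :
    brk (bs i) (bs j) = -sg (parity i) (parity j) • brk (bs j) (bs i) := by
  rw [brk_bs, brk_bs, Finsupp.smul_single, smul_eq_mul, brCoef_skew, add_comm]

theorem isHom_brk_bs (i j : TIdx) : IsHom (parity i + parity j) (brk (bs i) (bs j)) := by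
  intro x hx
  rw [brk_bs] at hx
  rw [Finset.mem_singleton.1 (Finsupp.support_single_subset hx), parity_add]

theorem brk_bs_jacobi (i j k : TIdx) :
    brk (bs i) (brk (bs j) (bs k)) =
      brk (brk (bs i) (bs j)) (bs k)
        + sg (parity i) (parity j) • brk (bs j) (brk (bs i) (bs k)) := by
  simp only [bs, brk_single, Finsupp.smul_single, smul_eq_mul, one_mul, mul_one]
  rw [add_assoc, add_left_comm j i k, ← Finsupp.single_add, brCoef_jacobi]

theorem parity_eq_zero_iff (i : TIdx) : parity i = 0 ↔
    ((∃ n, i = TIdx.L n) ∨ (∃ n, i = TIdx.Y (2*n)) ∨ (∃ n, i = TIdx.M (2*n))) := by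
  cases i <;> simp [parity, ZMod.intCast_eq_zero_iff_even, even_iff_exists_two_mul]

theorem parity_eq_one_iff (i : TIdx) : parity i = 1 ↔
    ((∃ k, i = TIdx.G k) ∨ (∃ k, i = TIdx.Y (2*k+1)) ∨ (∃ k, i = TIdx.M (2*k+1))) := by
  cases i <;> simp [parity, ZMod.intCast_eq_one_iff_odd, Odd]

/-- `tsns` is a Lie superalgebra: the bracket is super skew-symmetric,
respects the `ℤ₂`-grading, and satisfies the super Jacobi identity; the even part
is spanned by `{L_n, Y_n, M_n | n ∈ ℤ}` and the odd part by
`{G_r, Y_r, M_r | r ∈ 1/2 + ℤ}`. -/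
theorem tsns_is_lie_superalgebra :
    (∀ i j : TIdx, brk (bs i) (bs j) = -(sg (parity i) (parity j)) • brk (bs j) (bs i)) ∧
    (∀ i j : TIdx, IsHom (parity i + parity j) (brk (bs i) (bs j))) ∧
    (∀ i j k : TIdx, brk (bs i) (brk (bs j) (bs k)) =
      brk (brk (bs i) (bs j)) (bs k)
        + sg (parity i) (parity j) • brk (bs j) (brk (bs i) (bs k))) ∧
    (∀ i : TIdx, parity i = 0 ↔
      ((∃ n, i = TIdx.L n) ∨ (∃ n, i = TIdx.Y (2*n)) ∨ (∃ n, i = TIdx.M (2*n)))) ∧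
    (∀ i : TIdx, parity i = 1 ↔
      ((∃ k, i = TIdx.G k) ∨ (∃ k, i = TIdx.Y (2*k+1)) ∨ (∃ k, i = TIdx.M (2*k+1)))) :=
  ⟨brk_bs_skew, isHom_brk_bs, brk_bs_jacobi, parity_eq_zero_iff, parity_eq_one_iff⟩
end

section
/- The subspace I of tsns spanned by {Y_p, M_p | p ∈ (1/2)ℤ} is an ideal of tsns, and the quotient tsns/I is isomorphic as a Lie superalgebra to the N=1 Neveu–Schwarz algebra ns spanned by {L_n, G_r | n ∈ ℤ, r ∈ 1/2+ℤ}. -/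
open Finsupp

/-- Basis indices of the `N = 1` Neveu–Schwarz algebra: `L n` is `L_n`,
`G k` is `G_{k+1/2}`. -/
inductive NIdx : Type
  | L : ℤ → NIdx
  | G : ℤ → NIdx
  deriving DecidableEq

noncomputable section

/-- The underlying vector space of the Neveu–Schwarz algebra `ns`. -/
abbrev Ns : Type := NIdx →₀ ℂ

/-- Basis vectors of `ns`. -/
def nbs (i : NIdx) : Ns := Finsupp.single i 1

/-- The bracket of `ns` on basis vectors. -/
def nbrIdx : NIdx → NIdx → Ns
  | .L n, .L m => ((m : ℂ) - n) • nbs (.L (n + m))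
  | .L n, .G k => ((k : ℂ) + 1/2 - n/2) • nbs (.G (k + n))
  | .G k, .L n => (-((k : ℂ) + 1/2 - n/2)) • nbs (.G (k + n))
  | .G k, .G l => (2 : ℂ) • nbs (.L (k + l + 1))

/-- The bracket of `ns` as a bilinear map. -/
def nbrk : Ns →ₗ[ℂ] Ns →ₗ[ℂ] Ns :=
  Finsupp.lsum ℂ fun i => LinearMap.toSpanSingleton ℂ _
    (Finsupp.lsum ℂ fun j => LinearMap.toSpanSingleton ℂ Ns (nbrIdx i j))

end

noncomputable section

/-- The subspace `I` of `tsns` spanned by `{Y_p, M_p | p ∈ (1/2)ℤ}`. -/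
def Isub : Submodule ℂ Tsns :=
  Submodule.span ℂ {x : Tsns | ∃ k : ℤ, x = bs (TIdx.Y k) ∨ x = bs (TIdx.M k)}

end


/-!
The projection `tsns → ns` that keeps `L_n, G_r` and kills `Y_p, M_p` respects brackets: on
`L, G` the two brackets are given by the same formulas, and every bracket involving a `Y` or an
`M` lies in `span {Y_p, M_p}`. This projection is onto with kernel `I`, so `I` is an ideal and
the first isomorphism theorem identifies `tsns / I` with `ns`.
-/

noncomputable section

namespace Tsns

def projIdx : TIdx → Ns
  | .L n => nbs (.L n)
  | .G k => nbs (.G k)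
  | .Y _ => 0
  | .M _ => 0

def inclIdx : NIdx → Tsns
  | .L n => bs (.L n)
  | .G k => bs (.G k)

def proj : Tsns →ₗ[ℂ] Ns :=
  Finsupp.lsum ℂ fun i => LinearMap.toSpanSingleton ℂ Ns (projIdx i)

def incl : Ns →ₗ[ℂ] Tsns :=
  Finsupp.lsum ℂ fun i => LinearMap.toSpanSingleton ℂ Tsns (inclIdx i)

@[simp]
lemma proj_bs (i : TIdx) : proj (bs i) = projIdx i := by
  simp [proj, bs]

@[simp]
lemma incl_nbs (i : NIdx) : incl (nbs i) = inclIdx i := by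
  simp [incl, nbs]

lemma single_eq_smul_bs (i : TIdx) (c : ℂ) : Finsupp.single i c = c • bs i := by
  simp [bs]

lemma brk_bs_bs (i j : TIdx) : brk (bs i) (bs j) = brIdx i j := by
  simp [brk, bs]

lemma nbrk_nbs_nbs (i j : NIdx) : nbrk (nbs i) (nbs j) = nbrIdx i j := by
  simp [nbrk, nbs]

lemma proj_brk_bs_bs (i j : TIdx) :
    proj (brk (bs i) (bs j)) = nbrk (proj (bs i)) (proj (bs j)) := by
  rw [brk_bs_bs]
  cases i <;> cases j <;>
    simp only [brIdx, projIdx, map_smul, map_zero, proj_bs, nbrk_nbs_nbs, nbrIdx,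
      LinearMap.zero_apply, smul_zero]

lemma proj_brk (x y : Tsns) : proj (brk x y) = nbrk (proj x) (proj y) := by
  suffices brk.compr₂ proj = nbrk.compl₁₂ proj proj from LinearMap.congr_fun₂ this x y
  ext i j : 4
  exact proj_brk_bs_bs i j

lemma proj_incl (x : Ns) : proj (incl x) = x := by
  suffices proj ∘ₗ incl = LinearMap.id from LinearMap.congr_fun this x
  ext i : 2
  change proj (incl (nbs i)) = nbs i
  cases i <;> simp [inclIdx, projIdx]

lemma proj_surjective : Function.Surjective proj :=
  fun x => ⟨incl x, proj_incl x⟩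

lemma sub_incl_proj_mem_Isub (x : Tsns) : x - incl (proj x) ∈ Isub := by
  induction x using Finsupp.induction_linear with
  | zero => simp
  | add x y hx hy => simpa [add_sub_add_comm] using add_mem hx hy
  | single i c =>
    rw [single_eq_smul_bs, map_smul, map_smul, ← smul_sub]
    refine Submodule.smul_mem _ c ?_
    cases i with
    | L n => simp [projIdx, inclIdx]
    | G k => simp [projIdx, inclIdx]
    | Y k =>
      simp only [proj_bs, projIdx, map_zero, sub_zero]
      exact Submodule.subset_span ⟨k, Or.inl rfl⟩
    | M k =>
      simp only [proj_bs, projIdx, map_zero, sub_zero]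
      exact Submodule.subset_span ⟨k, Or.inr rfl⟩

lemma ker_proj : LinearMap.ker proj = Isub := by
  refine le_antisymm (fun x hx => ?_) ?_
  · simpa [LinearMap.mem_ker.mp hx] using sub_incl_proj_mem_Isub x
  · rw [Isub, Submodule.span_le]
    rintro x ⟨k, rfl | rfl⟩ <;> simp [projIdx]

end Tsns

end

/-- `I = span{Y_p, M_p}` is an ideal of `tsns`, and the quotient
`tsns/I` is isomorphic, as a Lie superalgebra, to the Neveu–Schwarz algebra `ns`. -/
theorem Isub_isIdeal_and_quotient_iso_ns :
    (∀ x : Tsns, ∀ v ∈ Isub, brk x v ∈ Isub) ∧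
    (∃ e : (Tsns ⧸ Isub) ≃ₗ[ℂ] Ns, ∀ x y : Tsns,
      e (Submodule.Quotient.mk (brk x y)) =
        nbrk (e (Submodule.Quotient.mk x)) (e (Submodule.Quotient.mk y))) := by
  refine ⟨fun x v hv => ?_, ?_⟩
  · rw [← Tsns.ker_proj, LinearMap.mem_ker] at hv ⊢
    rw [Tsns.proj_brk, hv, map_zero]
  · let e := (Submodule.quotEquivOfEq _ _ Tsns.ker_proj.symm).trans
      (Tsns.proj.quotKerEquivOfSurjective Tsns.proj_surjective)
    have he (x : Tsns) : e (Submodule.Quotient.mk x) = Tsns.proj x := rfl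
    exact ⟨e, fun x y => by simp only [he, Tsns.proj_brk]⟩
end

section
/- The center of the twisted N=1 Schrödinger–Neveu–Schwarz algebra tsns is the one-dimensional subspace ℂM_0. -/
open Finsupp

/-!
Degrees are counted in half-units by `hdeg`. The bracket with `L₀` acts diagonally, multiplying
each basis vector by minus its degree, so a central element lies in degree zero, which is spanned
by `L₀`, `Y₀`, `M₀`. Bracketing with `M_{1/2}` then detects the `L₀`-coefficient and bracketing
with `G_{1/2}` the `Y₀`-coefficient, while `M₀` brackets trivially with every basis vector.
-/

lemma brk_single_single (i j : TIdx) (a b : ℂ) :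
    brk (single i a) (single j b) = (a * b) • brIdx i j := by
  simp [brk, mul_smul, smul_comm a b]

lemma brIdx_L_zero (i : TIdx) : brIdx i (.L 0) = (-(hdeg i : ℂ) / 2) • bs i := by
  cases i <;> simp [brIdx, hdeg] <;> module

lemma brk_bs_L_zero_apply (x : Tsns) (t : TIdx) :
    brk x (bs (.L 0)) t = -(hdeg t : ℂ) / 2 * x t := by
  induction x using Finsupp.induction_linear with
  | zero => simp
  | add x y hx hy => simp [hx, hy, mul_add]
  | single i c =>
    rw [bs, brk_single_single, brIdx_L_zero, bs, smul_smul, Finsupp.smul_apply, single_apply,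
      single_apply]
    split_ifs with h
    · subst h
      simp only [mul_one, smul_eq_mul]
      ring
    · simp

lemma hdeg_eq_zero_iff (t : TIdx) : hdeg t = 0 ↔ t = .L 0 ∨ t = .Y 0 ∨ t = .M 0 := by
  cases t <;> simp [hdeg]
  omega

lemma apply_eq_zero_of_central {x : Tsns} (hx : ∀ y, brk x y = 0) {t : TIdx} (ht : hdeg t ≠ 0) :
    x t = 0 := by
  have h := brk_bs_L_zero_apply x t
  rw [hx] at h
  simpa [ht] using h.symm

lemma exists_eq_of_central {x : Tsns} (hx : ∀ y, brk x y = 0) :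
    ∃ a b c : ℂ, x = single (.L 0) a + single (.Y 0) b + single (.M 0) c := by
  refine ⟨x (.L 0), x (.Y 0), x (.M 0), ?_⟩
  ext t
  by_cases ht : hdeg t = 0
  · rcases (hdeg_eq_zero_iff t).1 ht with rfl | rfl | rfl <;> simp
  · have : t ≠ .L 0 ∧ t ≠ .Y 0 ∧ t ≠ .M 0 := by simpa [hdeg_eq_zero_iff] using ht
    simp [apply_eq_zero_of_central hx ht, this.1.symm, this.2.1.symm, this.2.2.symm]

lemma brk_bs_M_one (a b c : ℂ) :
    brk (single (.L 0) a + single (.Y 0) b + single (.M 0) c) (bs (.M 1)) =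
      (a / 2) • bs (.M 1) := by
  simp only [map_add, LinearMap.add_apply, bs, brk_single_single, brIdx]
  norm_num [Finsupp.single_mul, div_eq_mul_inv]

lemma brk_bs_G_zero (a b c : ℂ) :
    brk (single (.L 0) a + single (.Y 0) b + single (.M 0) c) (bs (.G 0)) =
      (a / 2) • bs (.G 0) + (b / 4) • bs (.Y 1) := by
  simp only [map_add, LinearMap.add_apply, bs, brk_single_single, brIdx]
  norm_num [Finsupp.single_mul, div_eq_mul_inv]

lemma brk_M_zero_left : brk (bs (.M 0)) = 0 := by
  ext j : 2
  cases j <;> simp [bs, brk_single_single, brIdx]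

/-- the center of `tsns` is the one-dimensional subspace `ℂ M₀`. -/
theorem center_tsns_eq_CM0 :
    ∀ x : Tsns, (∀ y : Tsns, brk x y = 0) ↔ ∃ c : ℂ, x = c • bs (TIdx.M 0) := by
  intro x
  refine ⟨fun hx => ?_, ?_⟩
  · obtain ⟨a, b, c, rfl⟩ := exists_eq_of_central hx
    have ha : a = 0 := by simpa [bs] using (brk_bs_M_one a b c).symm.trans (hx _)
    have hb : b = 0 := by simpa [ha, bs] using (brk_bs_G_zero a b c).symm.trans (hx _)
    exact ⟨c, by simp [ha, hb, bs]⟩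
  · rintro ⟨c, rfl⟩ y
    simp [brk_M_zero_left]
end

section
/- If r ∈ tsns ⊗ tsns satisfies x∗r = 0 for every x ∈ tsns (adjoint diagonal action), then r ∈ ℂ·(M_0 ⊗ M_0). -/
open Finsupp

/-! Only the action of the `L_n` is needed. Measure degrees in half-units, so that `L_n` has
degree `2n`. Then `L_N` sends a basis vector `a` to `c_N(a) · a'` with `deg a' = deg a + 2N`, and
for `|deg a| < N` the coefficient `c_N(a)` vanishes only at `a = M_0`. Take `N` beyond every
degree occurring in `r`. Then no index in the support of `r` has first factor `a'` or second
factor `b'`, so the components of `L_N ∗ r` at `(a', b)` and at `(a, b')` are `r(a ⊗ b) · c_N(a)`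
and `r(a ⊗ b) · c_N(b)`. Both vanish, which forces `a = b = M_0` whenever `r(a ⊗ b) ≠ 0`. -/

noncomputable section

section DiagShift

variable {α R : Type*} [Semiring R]

def diagShift (f : α → α) (c : α → R) (q : α × α →₀ R) : α × α →₀ R :=
  q.sum fun p a => a • (c p.1 • single (f p.1, p.2) 1 + c p.2 • single (p.1, f p.2) 1)

lemma diagShift_apply [DecidableEq α] (f : α → α) (c : α → R) (q : α × α →₀ R) (t : α × α) :
    diagShift f c q t = ∑ p ∈ q.support, q p *
      ((if (f p.1, p.2) = t then c p.1 else 0) + if (p.1, f p.2) = t then c p.2 else 0) := by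
  simp only [diagShift, Finsupp.sum, Finset.sum_apply', Finsupp.smul_apply, Finsupp.add_apply,
    single_apply, smul_eq_mul, mul_ite, mul_one, mul_zero]

variable {f : α → α} (hf : Function.Injective f) (c : α → R) (q : α × α →₀ R) (p : α × α)
include hf

lemma diagShift_apply_fst (hp0 : p ∈ q.support) (hp : ∀ p' ∈ q.support, p'.1 ≠ f p.1) :
    diagShift f c q (f p.1, p.2) = q p * c p.1 := by
  classical
  rw [diagShift_apply, Finset.sum_eq_single_of_mem p hp0]
  · simp [hp p hp0]
  · intro p' hp' hne
    have h1 : (f p'.1, p'.2) ≠ (f p.1, p.2) := fun h =>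
      hne (Prod.ext (hf (Prod.ext_iff.mp h).1) (Prod.ext_iff.mp h).2)
    have h2 : (p'.1, f p'.2) ≠ (f p.1, p.2) := fun h => hp p' hp' (Prod.ext_iff.mp h).1
    simp [h1, h2]

lemma diagShift_apply_snd (hp0 : p ∈ q.support) (hp : ∀ p' ∈ q.support, p'.2 ≠ f p.2) :
    diagShift f c q (p.1, f p.2) = q p * c p.2 := by
  classical
  rw [diagShift_apply, Finset.sum_eq_single_of_mem p hp0]
  · simp [hp p hp0]
  · intro p' hp' hne
    have h1 : (f p'.1, p'.2) ≠ (p.1, f p.2) := fun h => hp p' hp' (Prod.ext_iff.mp h).2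
    have h2 : (p'.1, f p'.2) ≠ (p.1, f p.2) := fun h =>
      hne (Prod.ext (Prod.ext_iff.mp h).1 (hf (Prod.ext_iff.mp h).2))
    simp [h1, h2]

lemma fst_eq_zero_of_diagShift_eq_zero [NoZeroDivisors R] (h0 : diagShift f c q = 0)
    (hp0 : p ∈ q.support) (hp : ∀ p' ∈ q.support, p'.1 ≠ f p.1) : c p.1 = 0 :=
  eq_zero_of_ne_zero_of_mul_left_eq_zero (mem_support_iff.mp hp0) <| by
    rw [← diagShift_apply_fst hf c q p hp0 hp, h0, Finsupp.zero_apply]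

lemma snd_eq_zero_of_diagShift_eq_zero [NoZeroDivisors R] (h0 : diagShift f c q = 0)
    (hp0 : p ∈ q.support) (hp : ∀ p' ∈ q.support, p'.2 ≠ f p.2) : c p.2 = 0 :=
  eq_zero_of_ne_zero_of_mul_left_eq_zero (mem_support_iff.mp hp0) <| by
    rw [← diagShift_apply_snd hf c q p hp0 hp, h0, Finsupp.zero_apply]

end DiagShift

def shiftL (n : ℤ) : TIdx → TIdx
  | .L m => .L (n + m)
  | .G k => .G (k + n)
  | .Y k => .Y (k + 2*n)
  | .M k => .M (k + 2*n)

def coeffL (n : ℤ) : TIdx → ℂ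
  | .L m => (m : ℂ) - n
  | .G k => (k : ℂ) + 1/2 - n/2
  | .Y k => if (k : ZMod 2) = 0 then ((k : ℂ) - n)/2 else (k : ℂ)/2
  | .M k => if (k : ZMod 2) = 0 then (k : ℂ)/2 else ((k : ℂ) + n)/2

lemma brIdx_L (n : ℤ) (i : TIdx) : brIdx (.L n) i = coeffL n i • bs (shiftL n i) := by
  cases i <;> rfl

lemma shiftL_injective (n : ℤ) : Function.Injective (shiftL n) := by
  intro a b hab
  cases a <;> cases b <;> simp [shiftL] at hab ⊢ <;> omega

lemma hdeg_shiftL (n : ℤ) (i : TIdx) : hdeg (shiftL n i) = hdeg i + 2*n := by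
  cases i <;> simp [hdeg, shiftL] <;> ring

lemma eq_M_zero_of_coeffL_eq_zero {n : ℤ} {i : TIdx} (hi : |hdeg i| < n)
    (h : coeffL n i = 0) : i = .M 0 := by
  rw [abs_lt] at hi
  cases i with
  | L m =>
    simp only [hdeg, coeffL, sub_eq_zero] at hi h
    norm_cast at h
    omega
  | G k =>
    simp only [hdeg, coeffL] at hi h
    have : ((2 * k + 1 : ℤ) : ℂ) = n := by push_cast; linear_combination 2 * h
    norm_cast at this
    omega
  | Y k =>
    simp only [hdeg, coeffL] at hi h
    split_ifs at h with hk
    · have : (k : ℂ) = n := by linear_combination 2 * h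
      norm_cast at this
      omega
    · have : (k : ℂ) = 0 := by linear_combination 2 * h
      norm_cast at this
      simp [this] at hk
  | M k =>
    simp only [hdeg, coeffL] at hi h
    split_ifs at h with hk
    · have : (k : ℂ) = 0 := by linear_combination 2 * h
      norm_cast at this
      rw [this]
    · have : ((k + n : ℤ) : ℂ) = 0 := by push_cast; linear_combination 2 * h
      norm_cast at this
      omega

lemma sg_zero (b : ZMod 2) : sg 0 b = 1 :=
  if_neg fun h => zero_ne_one h.1

lemma tp_bs_bs (a b : TIdx) : tp (bs a) (bs b) = single (a, b) 1 := by
  simp [tp, bs, lsum_single]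

lemma star2_bs_L (n : ℤ) (q : T2) :
    star2 (bs (.L n)) q = diagShift (shiftL n) (coeffL n) q := by
  rw [star2, bs, lsum_single, LinearMap.toSpanSingleton_apply_one, lsum_apply, diagShift]
  refine Finsupp.sum_congr fun p _ => ?_
  rw [LinearMap.toSpanSingleton_apply, brIdx_L, brIdx_L, map_smul, LinearMap.smul_apply,
    map_smul, tp_bs_bs, tp_bs_bs, parity, sg_zero, one_smul]

lemma exists_abs_hdeg_lt (s : Finset (TIdx × TIdx)) :
    ∃ N : ℤ, ∀ p ∈ s, |hdeg p.1| < N ∧ |hdeg p.2| < N := by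
  refine ⟨s.sup (fun p => (hdeg p.1).natAbs + (hdeg p.2).natAbs) + 1, fun p hp => ?_⟩
  have := Finset.le_sup (f := fun p => (hdeg p.1).natAbs + (hdeg p.2).natAbs) hp
  simp only [Int.abs_eq_natAbs]
  omega

lemma shiftL_ne_of_abs_hdeg_lt {N : ℤ} {i j : TIdx} (hi : |hdeg i| < N) (hj : |hdeg j| < N) :
    j ≠ shiftL N i := by
  intro h
  have := hdeg_shiftL N i
  rw [← h] at this
  rw [abs_lt] at hi hj
  omega

end

/-- if `r ∈ tsns ⊗ tsns` satisfies `x ∗ r = 0` for every `x ∈ tsns`,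
then `r ∈ ℂ·(M₀ ⊗ M₀)`. -/
theorem annihilated_tensor_in_center (r : T2) (h : ∀ x : Tsns, star2 x r = 0) :
    r ∈ CC := by
  obtain ⟨N, hN⟩ := exists_abs_hdeg_lt r.support
  have hL : diagShift (shiftL N) (coeffL N) r = 0 := star2_bs_L N r ▸ h (bs (.L N))
  have hsupp : r.support ⊆ {(.M 0, .M 0)} := by
    intro p hp
    have h1 : coeffL N p.1 = 0 :=
      fst_eq_zero_of_diagShift_eq_zero (shiftL_injective N) _ _ _ hL hp
      fun p' hp' => shiftL_ne_of_abs_hdeg_lt (hN p hp).1 (hN p' hp').1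
    have h2 : coeffL N p.2 = 0 :=
      snd_eq_zero_of_diagShift_eq_zero (shiftL_injective N) _ _ _ hL hp
      fun p' hp' => shiftL_ne_of_abs_hdeg_lt (hN p hp).2 (hN p' hp').2
    exact Finset.mem_singleton.mpr <| Prod.ext
      (eq_M_zero_of_coeffL_eq_zero (hN p hp).1 h1)
      (eq_M_zero_of_coeffL_eq_zero (hN p hp).2 h2)
  rw [support_subset_singleton] at hsupp
  rw [CC, hsupp, Submodule.mem_span_singleton]
  exact ⟨r (.M 0, .M 0), by rw [smul_single, smul_eq_mul, mul_one]⟩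
end
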